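/- For every real number ε > 0, the set E_ε has a least element, and this minimum equals 8 when ε ≤ 1/√6 and equals 2 + 1/ε² when ε ≥ 1/√6. -/
import Mathlib


/-- The set `E_ε` of nonzero Laplace eigenvalues of the Berger metric
`g_ε = σ₁² + σ₂² + ε²σ₃²` on the 3-sphere. -/
noncomputable def EVeps (ε : ℝ) : Set ℝ :=
  {x | ∃ n : ℕ, 1 ≤ n ∧ x = 2 * n + n ^ 2 / ε ^ 2} ∪
  {x | ∃ k : ℕ, Odd k ∧ 1 ≤ k ∧ x = k * (k + 2) - 1 + 1 / ε ^ 2} ∪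
  {x | ∃ l : ℕ, Even l ∧ 2 ≤ l ∧ x = l * (l + 2)}

theorem berger_eps_first_eigenvalue (ε : ℝ) (hε : 0 < ε) :
    ∃ m : ℝ, IsLeast (EVeps ε) m ∧
      (ε ≤ 1 / Real.sqrt 6 → m = 8) ∧
      (1 / Real.sqrt 6 ≤ ε → m = 2 + 1 / ε ^ 2) := by
  have he2 : (0:ℝ) < ε ^ 2 := by positivity
  have hc0 : (0:ℝ) < 1 / ε ^ 2 := by positivity
  have hs6 : Real.sqrt 6 ^ 2 = 6 := Real.sq_sqrt (by norm_num)
  have hs6pos : 0 < Real.sqrt 6 := Real.sqrt_pos.mpr (by norm_num)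
  refine ⟨min 8 (2 + 1 / ε ^ 2), ⟨?_, ?_⟩, ?_, ?_⟩
  · rcases le_total (8 : ℝ) (2 + 1 / ε ^ 2) with h | h
    · rw [min_eq_left h]
      right
      exact ⟨2, by norm_num, by norm_num⟩
    · rw [min_eq_right h]
      left; left
      exact ⟨1, le_refl 1, by push_cast; ring⟩
  · rintro x (( ⟨n, hn, rfl⟩ | ⟨k, hok, hk, rfl⟩) | ⟨l, hel, hl, rfl⟩)
    · refine le_trans (min_le_right _ _) ?_
      have hn1 : (1:ℝ) ≤ (n:ℝ) := by exact_mod_cast hn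
      have hn2 : (1:ℝ) ≤ (n:ℝ) ^ 2 := by nlinarith
      have : 1 / ε ^ 2 ≤ (n:ℝ) ^ 2 / ε ^ 2 := by gcongr
      linarith
    · refine le_trans (min_le_right _ _) ?_
      have hk1 : (1:ℝ) ≤ (k:ℝ) := by exact_mod_cast hk
      nlinarith
    · refine le_trans (min_le_left _ _) ?_
      have hl1 : (2:ℝ) ≤ (l:ℝ) := by exact_mod_cast hl
      nlinarith
  · intro h
    have hε2 : ε ^ 2 ≤ 1 / 6 := by
      have := pow_le_pow_left₀ hε.le h 2
      rw [div_pow, hs6] at this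
      simpa using this
    have : (8:ℝ) ≤ 2 + 1 / ε ^ 2 := by
      have h6 : (6:ℝ) ≤ 1 / ε ^ 2 := by
        rw [le_div_iff₀ he2]; linarith
      linarith
    rw [min_eq_left this]
  · intro h
    have hε2 : 1 / 6 ≤ ε ^ 2 := by
      have := pow_le_pow_left₀ (by positivity) h 2
      rw [div_pow, hs6] at this
      simpa using this
    have : 2 + 1 / ε ^ 2 ≤ 8 := by
      have h6 : 1 / ε ^ 2 ≤ 6 := by
        rw [div_le_iff₀ he2]; linarith
      linarith
    rw [min_eq_right this]
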